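/- Let ρ be an endomorphism of a finitely generated free Z-module L satisfying 1 + ρ + ρ^2 = 0. Then in L ⊗ Q/Z, the map γ mod 3L ↦ class of (1/3)(1-ρ)γ gives a well-defined homomorphism from L/3L onto the (1-ρ)-torsion subgroup of the 3-torsion of L ⊗ Q/Z, i.e., every class x ∈ L⊗Q/Z with 3x = 0 and (1-ρ)x = 0 arises this way. -/

import Mathlib

open TensorProduct

namespace SurjAux

abbrev M := ℚ ⧸ Submodule.span ℤ {(1 : ℚ)}

noncomputable abbrev α : M := Submodule.Quotient.mk ((1:ℚ)/3)

lemma three_zsmul {N : Type*} [AddCommGroup N] (y : N) : (3:ℤ) • y = y + y + y := by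
  rw [show (3:ℤ) = (1:ℤ) + 1 + 1 by norm_num, add_zsmul, add_zsmul, one_zsmul]

lemma smul_alpha_eq_zero_iff (a : ℤ) : a • α = 0 ↔ (3:ℤ) ∣ a := by
  rw [show a • α = Submodule.Quotient.mk (a • ((1:ℚ)/3)) from rfl,
    Submodule.Quotient.mk_eq_zero, Submodule.mem_span_singleton]
  constructor
  · rintro ⟨k, hk⟩
    simp only [zsmul_eq_mul] at hk
    refine ⟨k, ?_⟩
    have h3 : (a:ℚ) = 3 * k := by
      have : (k:ℚ) * 1 = a * (1/3) := hk
      linarith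
    exact_mod_cast h3
  · rintro ⟨k, rfl⟩
    refine ⟨k, ?_⟩
    simp only [zsmul_eq_mul]
    push_cast
    ring

lemma exists_int_of_three_torsion (q : M) (h : (3:ℤ) • q = 0) :
    ∃ m : ℤ, q = m • α := by
  obtain ⟨r, rfl⟩ := Submodule.Quotient.mk_surjective _ q
  rw [show (3:ℤ) • (Submodule.Quotient.mk r : M) = Submodule.Quotient.mk ((3:ℤ) • r) from rfl,
    Submodule.Quotient.mk_eq_zero, Submodule.mem_span_singleton] at h
  obtain ⟨m, hm⟩ := h
  simp only [zsmul_eq_mul] at hm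
  refine ⟨m, ?_⟩
  rw [show m • α = Submodule.Quotient.mk (m • ((1:ℚ)/3)) from rfl]
  congr 1
  simp only [zsmul_eq_mul]
  have h1 : (m:ℚ) * 1 = 3 * r := by exact_mod_cast hm
  linarith

end SurjAux

open SurjAux

/-- Let `ρ` be an endomorphism of a finitely generated free `ℤ`-module `L` with
`1 + ρ + ρ² = 0`. Then `γ mod 3L ↦ class of (1/3)(1-ρ)γ` is a well-defined map from
`L/3L` onto the `(1-ρ)`-torsion of the 3-torsion of `L ⊗ ℚ/ℤ`: it is constant on
cosets of `3L`, and every `x ∈ L ⊗ ℚ/ℤ` with `3x = 0` and `(1-ρ)x = 0` arises this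
way. -/
theorem surjective_onto_one_sub_rho_torsion
    (L : Type*) [AddCommGroup L] [Module ℤ L] [Module.Free ℤ L] [Module.Finite ℤ L]
    (ρ : Module.End ℤ L) (hord : ρ ^ 3 = 1) (hρ : 1 + ρ + ρ ^ 2 = 0) :
    (∀ γ δ : L, (∃ c : L, γ - δ = (3 : ℤ) • c) →
      (((1 - ρ) γ) ⊗ₜ[ℤ] (Submodule.Quotient.mk ((1 : ℚ) / 3) :
          ℚ ⧸ Submodule.span ℤ {(1 : ℚ)})) =
        ((1 - ρ) δ) ⊗ₜ[ℤ] Submodule.Quotient.mk ((1 : ℚ) / 3)) ∧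
    (∀ x : L ⊗[ℤ] (ℚ ⧸ Submodule.span ℤ {(1 : ℚ)}),
      (3 : ℤ) • x = 0 →
      LinearMap.rTensor (ℚ ⧸ Submodule.span ℤ {(1 : ℚ)}) (1 - ρ) x = 0 →
      ∃ γ : L, x = ((1 - ρ) γ) ⊗ₜ[ℤ] Submodule.Quotient.mk ((1 : ℚ) / 3)) := by
  have hα3 : (3:ℤ) • (α : M) = 0 := (smul_alpha_eq_zero_iff 3).2 ⟨1, by ring⟩
  constructor
  · rintro γ δ ⟨c, hc⟩
    have h0 : ((1 - ρ) (γ - δ)) ⊗ₜ[ℤ] (α : M) = 0 := by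
      rw [hc, three_zsmul, map_add, map_add, TensorProduct.add_tmul,
        TensorProduct.add_tmul, ← TensorProduct.tmul_add, ← TensorProduct.tmul_add,
        ← three_zsmul, hα3, TensorProduct.tmul_zero]
    rw [map_sub, TensorProduct.sub_tmul, sub_eq_zero] at h0
    exact h0
  · intro x h3 h1
    classical
    set ι := Module.Free.ChooseBasisIndex ℤ L
    let b : Module.Basis ι ℤ L := Module.Free.chooseBasis ℤ L
    let e := (TensorProduct.congr b.repr (LinearEquiv.refl ℤ M)).trans
        (TensorProduct.finsuppScalarLeft ℤ M ι)
    have he_tmul : ∀ (v : L) (q : M) (i : ι), e (v ⊗ₜ q) i = b.repr v i • q := by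
      intro v q i
      simp [e, TensorProduct.congr_tmul,
        TensorProduct.finsuppScalarLeft_apply_tmul_apply]
    -- step 1: x = γ₀ ⊗ α
    have hf3 : ∀ i : ι, (3:ℤ) • (e x i) = 0 := by
      intro i
      rw [three_zsmul] at h3
      have h : e x + e x + e x = 0 := by
        rw [← map_add, ← map_add, h3, map_zero]
      have := congrFun (congrArg (fun g : ι →₀ M => (g : ι → M)) h) i
      rw [three_zsmul]
      simpa using this
    choose m hm using fun i => exists_int_of_three_torsion (e x i) (hf3 i)
    set γ₀ : L := ∑ i, m i • b i with hγ₀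
    have hrepr : ∀ i, b.repr γ₀ i = m i := by
      intro i
      simp [hγ₀, Finsupp.single_apply]
    have hx : x = γ₀ ⊗ₜ α := by
      apply e.injective
      ext i
      rw [he_tmul, hrepr, ← hm]
    -- step 2: (1-ρ) γ₀ ∈ 3 L
    have h1' : ((1 - ρ) γ₀) ⊗ₜ[ℤ] (α : M) = 0 := by
      rw [hx, LinearMap.rTensor_tmul] at h1
      exact h1
    have hdvd : ∀ i, (3:ℤ) ∣ b.repr ((1 - ρ) γ₀) i := by
      intro i
      have hz : e (((1 - ρ) γ₀) ⊗ₜ[ℤ] (α : M)) i = 0 := by rw [h1']; simp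
      rw [he_tmul] at hz
      exact (smul_alpha_eq_zero_iff _).1 hz
    choose k hk using hdvd
    set δ : L := ∑ i, k i • b i with hδ
    have hreprδ : ∀ i, b.repr δ i = k i := by
      intro i
      simp [hδ, Finsupp.single_apply]
    have hδ3 : (1 - ρ) γ₀ = δ + δ + δ := by
      apply b.repr.injective
      ext i
      simp only [map_add, Finsupp.add_apply, hreprδ, hk i]
      ring
    -- step 3: algebra of endomorphisms
    have hkey : (1 - ρ) * (1 - ρ ^ 2) = 3 := by
      calc (1 - ρ) * (1 - ρ ^ 2) = 1 - ρ ^ 2 - ρ + ρ ^ 3 := by noncomm_ring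
        _ = 1 - ρ ^ 2 - ρ + 1 := by rw [hord]
        _ = 1 + 1 + 1 - (1 + ρ + ρ ^ 2) := by noncomm_ring
        _ = 1 + 1 + 1 := by rw [hρ, sub_zero]
        _ = 3 := by norm_num
    have hfac : (1 - ρ) * (1 + ρ) = 1 - ρ ^ 2 := by noncomm_ring
    have hinj : Function.Injective (1 - ρ : Module.End ℤ L) := by
      intro v w hvw
      have h0 : (1 - ρ) (v - w) = 0 := by rw [map_sub, hvw, sub_self]
      have hρvw : ρ (v - w) = v - w := by
        rw [LinearMap.sub_apply, Module.End.one_apply, sub_eq_zero] at h0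
        exact h0.symm
      have h30 : (v - w) + (v - w) + (v - w) = 0 := by
        have hz := congrArg (fun f : Module.End ℤ L => f (v - w)) hρ
        simpa only [LinearMap.add_apply, Module.End.one_apply, LinearMap.zero_apply,
          pow_two, Module.End.mul_apply, hρvw] using hz
      have hr0 : b.repr (v - w) = 0 := by
        ext i
        simp only [Finsupp.zero_apply]
        have := congrArg (fun z => b.repr z i) h30
        simp only [map_add, map_zero, Finsupp.add_apply, Finsupp.coe_zero,
          Pi.zero_apply] at this
        omega
      have hvw0 : v - w = 0 := by
        have := congrArg b.repr.symm hr0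
        simpa using this
      exact sub_eq_zero.mp hvw0
    have hγ₀eq : γ₀ = (1 - ρ) ((1 + ρ) δ) := by
      apply hinj
      rw [← Module.End.mul_apply, ← Module.End.mul_apply, mul_assoc, hfac, hkey, hδ3]
      rw [show (3 : Module.End ℤ L) = 1 + 1 + 1 by norm_num]
      simp [LinearMap.add_apply]
    exact ⟨(1 + ρ) δ, by rw [hx, hγ₀eq]⟩
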